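/- Let B ∈ ℝ^{n×(m−p)} and C ∈ ℝ^{n×p} with F := BBᵀ − CCᵀ positive definite, let P := (BBᵀ)⁻¹, let λ_M be the largest eigenvalue of Cᵀ P C (so λ_M < 1), let d ∈ ℝⁿ, let T > 0, and let α > 0 satisfy (α/2)·dᵀPd + √(2α)·‖CᵀPd‖ ≤ 1 − λ_M. Then for every measurable w : [0,T] → ℝᵖ with ∫₀ᵀ‖w(t)‖²dt ≤ 1, the control law u(t) := −Bᵀ(BBᵀ)⁻¹(Cw(t) + α e^{−αt} d) satisfies ∫₀ᵀ‖u(t)‖²dt ≤ 1. -/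

import Mathlib

/-!
Since `(B Bᵀ)⁻¹ (B Bᵀ) (B Bᵀ)⁻¹ = (B Bᵀ)⁻¹`, the energy of the control is the quadratic form of
`P = (B Bᵀ)⁻¹` at `C w + g d`, where `g t = α e^{-α t}`. Expanding it, the `w`-part is at most
`λ_M ‖w‖²`, the cross term `2 g ⟪Cᵀ P d, w⟫` is split by Young's inequality with weight
`√(2α) / α`, and the remaining part is a multiple of `g²`, whose integral is at most `α / 2`.
Integrating, the energy is at most `λ_M + √(2α) ‖Cᵀ P d‖ + (α / 2) dᵀ P d ≤ 1`.
-/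

open MeasureTheory Matrix
open scoped MatrixOrder

/-- Euclidean norm of a vector in `ℝ^k`. -/
noncomputable def eNorm {k : ℕ} (v : Fin k → ℝ) : ℝ := Real.sqrt (∑ i, (v i) ^ 2)

namespace Matrix

variable {ι κ R : Type*} [Fintype κ] [CommRing R]

theorem isSymm_mul_transpose (B : Matrix ι κ R) : (B * Bᵀ).IsSymm := by
  rw [IsSymm, transpose_mul, transpose_transpose]

variable [Fintype ι]

theorem mulVec_dotProduct (A : Matrix ι κ R) (x : κ → R) (y : ι → R) :
    A *ᵥ x ⬝ᵥ y = x ⬝ᵥ Aᵀ *ᵥ y := by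
  rw [dotProduct_transpose_mulVec, dotProduct_comm]

theorem IsSymm.dotProduct_mulVec_comm {P : Matrix ι ι R} (hP : P.IsSymm)
    (x y : ι → R) : x ⬝ᵥ P *ᵥ y = y ⬝ᵥ P *ᵥ x := by
  conv_lhs => rw [← hP.eq]
  exact dotProduct_transpose_mulVec P x y

theorem dotProduct_mulVec_add_smul {P : Matrix ι ι R} (hP : P.IsSymm)
    (C : Matrix ι κ R) (ω : κ → R) (g : R) (d : ι → R) :
    (C *ᵥ ω + g • d) ⬝ᵥ P *ᵥ (C *ᵥ ω + g • d)
      = ω ⬝ᵥ (Cᵀ * P * C) *ᵥ ω + 2 * g * ((Cᵀ * P) *ᵥ d ⬝ᵥ ω) + g ^ 2 * (d ⬝ᵥ P *ᵥ d) := by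
  have hquad : C *ᵥ ω ⬝ᵥ P *ᵥ C *ᵥ ω = ω ⬝ᵥ (Cᵀ * P * C) *ᵥ ω := by
    rw [mulVec_dotProduct, mulVec_mulVec, mulVec_mulVec]
  have hcross : C *ᵥ ω ⬝ᵥ P *ᵥ d = (Cᵀ * P) *ᵥ d ⬝ᵥ ω := by
    rw [mulVec_dotProduct, mulVec_mulVec, dotProduct_comm]
  simp only [mulVec_add, mulVec_smul, add_dotProduct, dotProduct_add, smul_dotProduct,
    dotProduct_smul, smul_eq_mul, hquad, hP.dotProduct_mulVec_comm d, hcross]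
  ring

variable [DecidableEq ι]

theorem nonsing_inv_mul_mul_nonsing_inv (A : Matrix ι ι R) :
    A⁻¹ * A * A⁻¹ = A⁻¹ := by
  by_cases hA : IsUnit A.det
  · rw [Matrix.mul_assoc, nonsing_inv_mul_cancel_left A _ hA]
  · simp [nonsing_inv_apply_not_isUnit A hA]

theorem dotProduct_self_transpose_mul_nonsing_inv_mulVec (B : Matrix ι κ R)
    (x : ι → R) :
    (Bᵀ * (B * Bᵀ)⁻¹) *ᵥ x ⬝ᵥ (Bᵀ * (B * Bᵀ)⁻¹) *ᵥ x = x ⬝ᵥ (B * Bᵀ)⁻¹ *ᵥ x := by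
  have hN : (Bᵀ * (B * Bᵀ)⁻¹)ᵀ * (Bᵀ * (B * Bᵀ)⁻¹) = (B * Bᵀ)⁻¹ := by
    rw [transpose_mul, (isSymm_mul_transpose B).inv.eq, transpose_transpose,
      Matrix.mul_assoc, ← Matrix.mul_assoc B, ← Matrix.mul_assoc, nonsing_inv_mul_mul_nonsing_inv]
  rw [dotProduct_mulVec, ← mulVec_transpose, mulVec_mulVec, hN, dotProduct_comm]

theorem dotProduct_mulVec_le_of_hasEigenvalue_le {A : Matrix ι ι ℝ} (hA : A.IsHermitian)
    {lam : ℝ} (hlam : ∀ μ, Module.End.HasEigenvalue (toLin' A) μ → μ ≤ lam) (v : ι → ℝ) :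
    v ⬝ᵥ A *ᵥ v ≤ lam * (v ⬝ᵥ v) := by
  have hle : A ≤ algebraMap ℝ _ lam := by
    rw [le_algebraMap_iff_spectrum_le hA.isSelfAdjoint]
    intro μ hμ
    apply hlam
    rwa [Module.End.hasEigenvalue_iff_mem_spectrum, spectrum_toLin']
  have := (le_iff.mp hle).dotProduct_mulVec_nonneg v
  simp only [Algebra.algebraMap_eq_smul_one, sub_mulVec, smul_mulVec, one_mulVec,
    dotProduct_sub, dotProduct_smul, smul_eq_mul, sub_nonneg] at this
  exact this

theorem PosSemidef.nonneg_of_hasEigenvalue {A : Matrix ι ι ℝ} (hA : A.PosSemidef) {μ : ℝ}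
    (hμ : Module.End.HasEigenvalue (toLin' A) μ) : 0 ≤ μ := by
  rw [Module.End.hasEigenvalue_iff_mem_spectrum, spectrum_toLin'] at hμ
  exact spectrum_nonneg_of_nonneg hA.nonneg hμ

end Matrix

section eNorm

variable {k : ℕ}

theorem eNorm_nonneg (v : Fin k → ℝ) : 0 ≤ eNorm v := Real.sqrt_nonneg _

theorem eNorm_sq (v : Fin k → ℝ) : eNorm v ^ 2 = v ⬝ᵥ v := by
  rw [eNorm, Real.sq_sqrt (Finset.sum_nonneg fun i _ => sq_nonneg _), dotProduct]
  simp only [sq]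

theorem eNorm_neg (v : Fin k → ℝ) : eNorm (-v) = eNorm v := by
  simp [eNorm]

theorem dotProduct_le_eNorm_mul_eNorm (v w : Fin k → ℝ) : v ⬝ᵥ w ≤ eNorm v * eNorm w := by
  simpa [dotProduct, eNorm] using Real.sum_mul_le_sqrt_mul_sqrt Finset.univ v w

end eNorm

theorem two_mul_mul_le_mul_sq_add_sq_div {s : ℝ} (hs : 0 < s) (a b : ℝ) :
    2 * a * b ≤ s * a ^ 2 + b ^ 2 / s := by
  have hsq : s * a ^ 2 + b ^ 2 / s - 2 * a * b = (s * a - b) ^ 2 / s := by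
    field_simp
    ring
  have : 0 ≤ (s * a - b) ^ 2 / s := by positivity
  linarith

theorem dotProduct_mulVec_add_smul_le {n p : ℕ} {P : Matrix (Fin n) (Fin n) ℝ} (hP : P.IsSymm)
    {C : Matrix (Fin n) (Fin p) ℝ} {lam : ℝ}
    (hlam : ∀ v, v ⬝ᵥ (Cᵀ * P * C) *ᵥ v ≤ lam * (v ⬝ᵥ v)) {s g : ℝ} (hs : 0 < s) (hg : 0 ≤ g)
    (d : Fin n → ℝ) (ω : Fin p → ℝ) :
    (C *ᵥ ω + g • d) ⬝ᵥ P *ᵥ (C *ᵥ ω + g • d)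
      ≤ (lam + eNorm ((Cᵀ * P) *ᵥ d) / s) * eNorm ω ^ 2
        + (eNorm ((Cᵀ * P) *ᵥ d) * s + d ⬝ᵥ P *ᵥ d) * g ^ 2 := by
  set K := eNorm ((Cᵀ * P) *ᵥ d)
  have hquad : ω ⬝ᵥ (Cᵀ * P * C) *ᵥ ω ≤ lam * eNorm ω ^ 2 := eNorm_sq ω ▸ hlam ω
  have hcross : 2 * g * ((Cᵀ * P) *ᵥ d ⬝ᵥ ω) ≤ K * (s * g ^ 2 + eNorm ω ^ 2 / s) :=
    calc 2 * g * ((Cᵀ * P) *ᵥ d ⬝ᵥ ω) ≤ K * (2 * g * eNorm ω) := by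
          nlinarith [dotProduct_le_eNorm_mul_eNorm ((Cᵀ * P) *ᵥ d) ω]
      _ ≤ K * (s * g ^ 2 + eNorm ω ^ 2 / s) :=
          mul_le_mul_of_nonneg_left (two_mul_mul_le_mul_sq_add_sq_div hs g _) (eNorm_nonneg _)
  rw [dotProduct_mulVec_add_smul hP]
  have : K * (eNorm ω ^ 2 / s) = K / s * eNorm ω ^ 2 := by ring
  linarith

theorem setIntegral_le_mul_add_mul {X : Type*} [MeasurableSpace X] {μ : Measure X} {s : Set X}
    {f h G : X → ℝ} {a b F H : ℝ} (ha : 0 ≤ a) (hb : 0 ≤ b) (hf : IntegrableOn f s μ)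
    (hh : IntegrableOn h s μ) (hG₀ : ∀ x, 0 ≤ G x) (hG : ∀ x, G x ≤ a * f x + b * h x)
    (hfF : ∫ x in s, f x ∂μ ≤ F) (hhH : ∫ x in s, h x ∂μ ≤ H) :
    ∫ x in s, G x ∂μ ≤ a * F + b * H :=
  calc ∫ x in s, G x ∂μ ≤ ∫ x in s, (a * f x + b * h x) ∂μ :=
        integral_mono_of_nonneg (ae_of_all _ hG₀) ((hf.const_mul a).add (hh.const_mul b))
          (ae_of_all _ hG)
    _ = a * ∫ x in s, f x ∂μ + b * ∫ x in s, h x ∂μ := by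
        rw [integral_add (hf.const_mul a) (hh.const_mul b), integral_const_mul,
          integral_const_mul]
    _ ≤ a * F + b * H := by gcongr

section ExpDecay

open Real Set

theorem sq_mul_exp_neg_eq (α t : ℝ) :
    (α * exp (-(α * t))) ^ 2 = α ^ 2 * exp (-(2 * α) * t) := by
  rw [mul_pow, sq (exp _), ← exp_add]
  ring_nf

theorem integrableOn_Ioi_sq_mul_exp_neg {α : ℝ} (hα : 0 < α) (c : ℝ) :
    IntegrableOn (fun t => (α * exp (-(α * t))) ^ 2) (Ioi c) := by
  simp only [sq_mul_exp_neg_eq]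
  exact (integrableOn_exp_mul_Ioi (by linarith) c).const_mul _

theorem setIntegral_Ioc_sq_mul_exp_neg_le {α : ℝ} (hα : 0 < α) (T : ℝ) :
    ∫ t in Ioc 0 T, (α * exp (-(α * t))) ^ 2 ≤ α / 2 :=
  calc ∫ t in Ioc 0 T, (α * exp (-(α * t))) ^ 2
      ≤ ∫ t in Ioi 0, (α * exp (-(α * t))) ^ 2 :=
        setIntegral_mono_set (integrableOn_Ioi_sq_mul_exp_neg hα 0)
          (ae_of_all _ fun _ => sq_nonneg _) Ioc_subset_Ioi_self.eventuallyLE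
    _ = α / 2 := by
        simp only [sq_mul_exp_neg_eq]
        rw [integral_const_mul, integral_exp_mul_Ioi (by linarith)]
        field_simp
        simp

end ExpDecay

theorem control_law_admissible_general {n m p : ℕ} (B : Matrix (Fin n) (Fin (m - p)) ℝ)
    (C : Matrix (Fin n) (Fin p) ℝ)
    (lamM : ℝ)
    (hlam : IsGreatest {μ : ℝ | Module.End.HasEigenvalue
        (Matrix.toLin' (Cᵀ * (B * Bᵀ)⁻¹ * C)) μ} lamM)
    (d : Fin n → ℝ) (T α : ℝ) (hα : 0 < α)
    (hcond : α / 2 * (d ⬝ᵥ ((B * Bᵀ)⁻¹.mulVec d))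
        + Real.sqrt (2 * α) * eNorm ((Cᵀ * (B * Bᵀ)⁻¹).mulVec d) ≤ 1 - lamM) :
    ∀ w : ℝ → Fin p → ℝ, Measurable w →
      IntegrableOn (fun t => (eNorm (w t)) ^ 2) (Set.Ioc 0 T) →
      (∫ t in Set.Ioc (0 : ℝ) T, (eNorm (w t)) ^ 2) ≤ 1 →
      (∫ t in Set.Ioc (0 : ℝ) T,
          (eNorm (-(Bᵀ * (B * Bᵀ)⁻¹).mulVec
            (C.mulVec (w t) + (α * Real.exp (-(α * t))) • d))) ^ 2) ≤ 1 := by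
  intro w _ hw hw₁
  set P := (B * Bᵀ)⁻¹
  have hP : P.PosSemidef := by simpa using (posSemidef_self_mul_conjTranspose B).inv
  have hM : (Cᵀ * P * C).PosSemidef := by simpa using hP.conjTranspose_mul_mul_same C
  have hlam₀ : 0 ≤ lamM := hM.nonneg_of_hasEigenvalue hlam.1
  set K := eNorm ((Cᵀ * P) *ᵥ d)
  have hK : 0 ≤ K := eNorm_nonneg _
  set r := Real.sqrt (2 * α)
  have hr : 0 < r := by positivity
  have hr₂ : r ^ 2 = 2 * α := Real.sq_sqrt (by positivity)
  calc _ ≤ (lamM + K / (r / α)) * 1 + (K * (r / α) + d ⬝ᵥ P *ᵥ d) * (α / 2) := by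
        refine setIntegral_le_mul_add_mul (by positivity)
          (add_nonneg (by positivity) (hP.dotProduct_mulVec_nonneg d)) hw
          ((integrableOn_Ioi_sq_mul_exp_neg hα 0).mono_set Set.Ioc_subset_Ioi_self)
          (fun _ => sq_nonneg _) (fun t => ?_) hw₁ (setIntegral_Ioc_sq_mul_exp_neg_le hα T)
        rw [eNorm_neg, eNorm_sq, dotProduct_self_transpose_mul_nonsing_inv_mulVec]
        exact dotProduct_mulVec_add_smul_le (isSymm_mul_transpose B).inv
          (dotProduct_mulVec_le_of_hasEigenvalue_le hM.isHermitian fun _ h => hlam.2 h)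
          (by positivity) (by positivity) d (w t)
    _ = lamM + r * K + α / 2 * (d ⬝ᵥ P *ᵥ d) := by
        field_simp
        linear_combination (-K) * hr₂
    _ ≤ 1 := by linarith

theorem control_law_admissible {n m p : ℕ} (B : Matrix (Fin n) (Fin (m - p)) ℝ)
    (C : Matrix (Fin n) (Fin p) ℝ) (hF : (B * Bᵀ - C * Cᵀ).PosDef)
    (lamM : ℝ)
    (hlam : IsGreatest {μ : ℝ | Module.End.HasEigenvalue
        (Matrix.toLin' (Cᵀ * (B * Bᵀ)⁻¹ * C)) μ} lamM)
    (d : Fin n → ℝ) (T α : ℝ) (hT : 0 < T) (hα : 0 < α)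
    (hcond : α / 2 * (d ⬝ᵥ ((B * Bᵀ)⁻¹.mulVec d))
        + Real.sqrt (2 * α) * eNorm ((Cᵀ * (B * Bᵀ)⁻¹).mulVec d) ≤ 1 - lamM) :
    ∀ w : ℝ → Fin p → ℝ, Measurable w →
      IntegrableOn (fun t => (eNorm (w t)) ^ 2) (Set.Ioc 0 T) →
      (∫ t in Set.Ioc (0 : ℝ) T, (eNorm (w t)) ^ 2) ≤ 1 →
      (∫ t in Set.Ioc (0 : ℝ) T,
          (eNorm (-(Bᵀ * (B * Bᵀ)⁻¹).mulVec
            (C.mulVec (w t) + (α * Real.exp (-(α * t))) • d))) ^ 2) ≤ 1 :=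
  control_law_admissible_general B C lamM hlam d T α hα hcond
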